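/- arXiv:2110.14199 — 4 statements merged into one kernel-verified Lean document; each statement's English description precedes it below -/
import Mathlib

section
/- Let N ≥ 1, let a_{ij} (for i ≠ j in {1,…,N}) be nonnegative reals with a_{ij} = a_{ji}, let s_i ≥ 0, and define the modified Laplacian H by H_{ij} = −a_{ij} for i ≠ j and H_{ii} = Σ_{j ≠ i} a_{ij} + s_i. Assume that for every node i there is a finite path i = v_0, v_1, …, v_p with a_{v_l v_{l+1}} > 0 for each 0 ≤ l < p and s_{v_p} > 0 (i.e., every connected component of the positive-weight graph contains a node with a positive selfloop weight). Then H is positive definite: xᵀ H x > 0 for every nonzero x ∈ ℝᴺ, so all eigenvalues of H are real and strictly positive. -/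
open Matrix

/-!
Writing `H` as the Laplacian of `a` plus the diagonal `s`, the quadratic form is
`xᵀ H x = ½ ∑ᵢⱼ aᵢⱼ (xᵢ - xⱼ)² + ∑ᵢ sᵢ xᵢ²`, a sum of nonnegative terms. If it vanishes, `x` is
constant along every positive-weight edge and vanishes at every node with a positive selfloop;
following the path from any node to such a selfloop shows `x = 0`.
-/

lemma apply_eq_of_path {ι : Type*} {a : ι → ι → ℝ} {x : ι → ℝ}
    (hedge : ∀ i j, 0 < a i j → x i = x j) (v : ℕ → ι) :
    ∀ p, (∀ l, l < p → 0 < a (v l) (v (l + 1))) → x (v p) = x (v 0)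
  | 0, _ => rfl
  | p + 1, hv =>
    (hedge _ _ (hv p p.lt_succ_self)).symm.trans
      (apply_eq_of_path hedge v p fun l hl => hv l (hl.trans p.lt_succ_self))

lemma edge_term_nonneg {ι : Type*} {a : ι → ι → ℝ} (ha_nonneg : ∀ i j, i ≠ j → 0 ≤ a i j)
    (x : ι → ℝ) (i j : ι) : 0 ≤ a i j * (x i - x j) ^ 2 := by
  by_cases hij : i = j
  · simp [hij]
  · exact mul_nonneg (ha_nonneg i j hij) (sq_nonneg _)

section ModifiedLaplacian

variable {ι : Type*} [Fintype ι] {a : ι → ι → ℝ} {s : ι → ℝ} {H : Matrix ι ι ℝ}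

def IsModifiedLaplacian [DecidableEq ι] (a : ι → ι → ℝ) (s : ι → ℝ)
    (H : Matrix ι ι ℝ) : Prop :=
  ∀ i j, H i j =
    if i = j then (∑ k ∈ Finset.univ.filter (fun k => k ≠ i), a i k) + s i else -(a i j)

lemma isHermitian_of_modifiedLaplacian [DecidableEq ι]
    (ha_symm : ∀ i j, i ≠ j → a i j = a j i) (hH : IsModifiedLaplacian a s H) : H.IsHermitian := by
  ext i j
  rw [conjTranspose_apply, star_trivial, hH, hH]
  by_cases hij : i = j
  · subst hij; rfl
  · rw [if_neg (Ne.symm hij), if_neg hij, ha_symm j i (Ne.symm hij)]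

lemma mulVec_modifiedLaplacian [DecidableEq ι] (hH : IsModifiedLaplacian a s H)
    (x : ι → ℝ) (i : ι) :
    (H *ᵥ x) i = ∑ j, a i j * (x i - x j) + s i * x i := by
  have hoff : ∀ j ∈ Finset.univ.erase i, H i j * x j = a i j * (x i - x j) - a i j * x i := by
    intro j hj
    rw [hH, if_neg (Finset.ne_of_mem_erase hj).symm]
    ring
  rw [← Finset.sum_erase _ (by rw [sub_self, mul_zero]), mulVec, dotProduct,
    ← Finset.sum_erase_add _ _ (Finset.mem_univ i), Finset.sum_congr rfl hoff, hH, if_pos rfl,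
    Finset.filter_ne', Finset.sum_sub_distrib, ← Finset.sum_mul]
  ring

/-- The diagonal values `a i i` are arbitrary; they only ever meet the factor `x i - x i = 0`. -/
lemma dotProduct_mulVec_modifiedLaplacian [DecidableEq ι]
    (ha_symm : ∀ i j, i ≠ j → a i j = a j i) (hH : IsModifiedLaplacian a s H) (x : ι → ℝ) :
    x ⬝ᵥ (H *ᵥ x) = (∑ i, ∑ j, a i j * (x i - x j) ^ 2) / 2 + ∑ i, s i * x i ^ 2 := by
  have hswap :
      ∑ i, ∑ j, a i j * (x i * (x i - x j)) = ∑ i, ∑ j, a i j * (x j * (x j - x i)) := by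
    rw [Finset.sum_comm]
    refine Finset.sum_congr rfl fun i _ => Finset.sum_congr rfl fun j _ => ?_
    by_cases hij : i = j
    · subst hij; ring
    · rw [ha_symm j i (Ne.symm hij)]
  have hsq : ∑ i, ∑ j, a i j * (x i - x j) ^ 2 =
      ∑ i, ∑ j, a i j * (x i * (x i - x j)) + ∑ i, ∑ j, a i j * (x j * (x j - x i)) := by
    simp only [← Finset.sum_add_distrib]
    exact Finset.sum_congr rfl fun i _ => Finset.sum_congr rfl fun j _ => by ring
  have hexpand :
      x ⬝ᵥ (H *ᵥ x) = ∑ i, ∑ j, a i j * (x i * (x i - x j)) + ∑ i, s i * x i ^ 2 := by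
    simp only [dotProduct, mulVec_modifiedLaplacian hH, ← Finset.sum_add_distrib]
    exact Finset.sum_congr rfl fun i _ => by
      rw [mul_add, Finset.mul_sum]
      congr 1
      · exact Finset.sum_congr rfl fun j _ => by ring
      · ring
  rw [hexpand, hsq, ← hswap]
  ring

lemma eq_of_sum_edge_terms_eq_zero (ha_nonneg : ∀ i j, i ≠ j → 0 ≤ a i j) {x : ι → ℝ}
    (h : ∑ i, ∑ j, a i j * (x i - x j) ^ 2 = 0) {i j : ι} (hij : 0 < a i j) : x i = x j := by
  have hrow := (Finset.sum_eq_zero_iff_of_nonneg fun i _ =>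
    Finset.sum_nonneg fun j _ => edge_term_nonneg ha_nonneg x i j).mp h i (Finset.mem_univ i)
  have hterm := (Finset.sum_eq_zero_iff_of_nonneg fun j _ =>
    edge_term_nonneg ha_nonneg x i j).mp hrow j (Finset.mem_univ j)
  rw [mul_eq_zero, or_iff_right hij.ne', sq_eq_zero_iff, sub_eq_zero] at hterm
  exact hterm

lemma eq_zero_of_sum_selfloop_terms_eq_zero (hs : ∀ i, 0 ≤ s i) {x : ι → ℝ}
    (h : ∑ i, s i * x i ^ 2 = 0) {i : ι} (hi : 0 < s i) : x i = 0 := by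
  have hterm := (Finset.sum_eq_zero_iff_of_nonneg fun i _ =>
    mul_nonneg (hs i) (sq_nonneg (x i))).mp h i (Finset.mem_univ i)
  rwa [mul_eq_zero, or_iff_right hi.ne', sq_eq_zero_iff] at hterm

lemma dotProduct_mulVec_pos_of_modifiedLaplacian [DecidableEq ι]
    (ha_nonneg : ∀ i j, i ≠ j → 0 ≤ a i j) (ha_symm : ∀ i j, i ≠ j → a i j = a j i)
    (hs : ∀ i, 0 ≤ s i) (hH : IsModifiedLaplacian a s H)
    (hpath : ∀ i, ∃ (p : ℕ) (v : ℕ → ι), v 0 = i ∧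
      (∀ l, l < p → 0 < a (v l) (v (l + 1))) ∧ 0 < s (v p))
    {x : ι → ℝ} (hx : x ≠ 0) : 0 < x ⬝ᵥ (H *ᵥ x) := by
  rw [dotProduct_mulVec_modifiedLaplacian ha_symm hH x]
  have hedges : 0 ≤ ∑ i, ∑ j, a i j * (x i - x j) ^ 2 :=
    Finset.sum_nonneg fun i _ => Finset.sum_nonneg fun j _ => edge_term_nonneg ha_nonneg x i j
  have hloops : 0 ≤ ∑ i, s i * x i ^ 2 :=
    Finset.sum_nonneg fun i _ => mul_nonneg (hs i) (sq_nonneg (x i))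
  refine lt_of_le_of_ne (by positivity) fun hzero => hx (funext fun i => ?_)
  obtain ⟨hedges0, hloops0⟩ := (add_eq_zero_iff_of_nonneg (by positivity) hloops).mp hzero.symm
  obtain ⟨p, v, rfl, hv, hsv⟩ := hpath i
  have hedge : ∀ i j, 0 < a i j → x i = x j := fun i j =>
    eq_of_sum_edge_terms_eq_zero ha_nonneg (by linarith)
  rw [← apply_eq_of_path hedge v p hv]
  exact eq_zero_of_sum_selfloop_terms_eq_zero hs hloops0 hsv

end ModifiedLaplacian

theorem stmt5_general {N : ℕ}
    (a : Fin N → Fin N → ℝ) (s : Fin N → ℝ)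
    (ha_nonneg : ∀ i j, i ≠ j → 0 ≤ a i j)
    (ha_symm : ∀ i j, i ≠ j → a i j = a j i)
    (hs : ∀ i, 0 ≤ s i)
    (H : Matrix (Fin N) (Fin N) ℝ)
    (hH : ∀ i j, H i j =
      if i = j then (∑ k ∈ Finset.univ.filter (fun k => k ≠ i), a i k) + s i
      else -(a i j))
    (hpath : ∀ i : Fin N, ∃ (p : ℕ) (v : ℕ → Fin N), v 0 = i ∧
      (∀ l, l < p → 0 < a (v l) (v (l + 1))) ∧ 0 < s (v p)) :
    H.PosDef ∧
      (∀ x : Fin N → ℝ, x ≠ 0 → 0 < x ⬝ᵥ H.mulVec x) ∧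
      (∀ μ ∈ spectrum ℝ H, 0 < μ) := by
  have hpos : ∀ x : Fin N → ℝ, x ≠ 0 → 0 < x ⬝ᵥ H.mulVec x := fun x hx =>
    dotProduct_mulVec_pos_of_modifiedLaplacian ha_nonneg ha_symm hs hH hpath hx
  have hpd : H.PosDef := .of_dotProduct_mulVec_pos
    (isHermitian_of_modifiedLaplacian ha_symm hH) fun x hx => by simpa using hpos x hx
  refine ⟨hpd, hpos, fun μ hμ => ?_⟩
  obtain ⟨i, rfl⟩ := hpd.isHermitian.spectrum_real_eq_range_eigenvalues ▸ hμ
  exact hpd.eigenvalues_pos i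

/-- With the modified Laplacian `H` of a control sublayer graph (nonnegative symmetric
edge weights `a`, nonnegative selfloop weights `s`), if from every node `i` there is
a finite path `i = v 0, v 1, …, v p` of positive-weight edges
(`0 < a (v l) (v (l+1))` for `l < p`) ending at a node with a positive selfloop
weight (`0 < s (v p)`), then `H` is positive definite: `xᵀ H x > 0` for every
nonzero `x ∈ ℝᴺ`, and all (real) eigenvalues of `H` are strictly positive. -/
theorem stmt5 {N : ℕ} (hN : 1 ≤ N)
    (a : Fin N → Fin N → ℝ) (s : Fin N → ℝ)
    (ha_nonneg : ∀ i j, i ≠ j → 0 ≤ a i j)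
    (ha_symm : ∀ i j, i ≠ j → a i j = a j i)
    (hs : ∀ i, 0 ≤ s i)
    (H : Matrix (Fin N) (Fin N) ℝ)
    (hH : ∀ i j, H i j =
      if i = j then (∑ k ∈ Finset.univ.filter (fun k => k ≠ i), a i k) + s i
      else -(a i j))
    (hpath : ∀ i : Fin N, ∃ (p : ℕ) (v : ℕ → Fin N), v 0 = i ∧
      (∀ l, l < p → 0 < a (v l) (v (l + 1))) ∧ 0 < s (v p)) :
    H.PosDef ∧
      (∀ x : Fin N → ℝ, x ≠ 0 → 0 < x ⬝ᵥ H.mulVec x) ∧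
      (∀ μ ∈ spectrum ℝ H, 0 < μ) :=
  stmt5_general a s ha_nonneg ha_symm hs H hH hpath
end

section
/- Let A, P, Q be real n×n matrices with P, Q symmetric, B_u a real n×m matrix, R a symmetric positive definite real m×m matrix, μ > 0, a_f > 0, a_d > 0, c ≥ 0, and set Q_f := Q + (a_f c + a_d) I_n. Suppose the algebraic Riccati equation Aᵀ P + P A + Q_f − μ² P B_u R⁻¹ B_uᵀ P = 0 holds and let K := −μ R⁻¹ B_uᵀ P. Let E be a real m×m matrix, B_f a real n×g matrix, B_d a real n×q matrix. Then for all x ∈ ℝⁿ, d ∈ ℝ^q and all f ∈ ℝᵍ with fᵀ f ≤ c · xᵀ x, setting v := K x and w := A x + μ B_u v + μ B_u E v + B_f f + B_d d, one has 2 xᵀ P w ≤ −xᵀ (Q + Kᵀ R K + 2 Kᵀ R E K − (1/a_f) P B_f B_fᵀ P) x + (1/a_d) ‖P B_d‖² ‖d‖², where ‖·‖ denotes the ℓ²-operator norm on matrices and the Euclidean norm on vectors. -/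
open Matrix

/-- The ℓ²-operator norm (induced 2-norm) of a real matrix: the operator norm of the
associated linear map between Euclidean spaces. -/
noncomputable def l2OpNorm {p n : ℕ} (M : Matrix (Fin p) (Fin n) ℝ) : ℝ :=
  ‖(Matrix.toEuclideanLin M).toContinuousLinearMap‖

/-!
Expand `2 xᵀ P w` term by term. Symmetrising the drift term and using the Riccati equation gives
`2 xᵀ P A x = xᵀ Kᵀ R K x - xᵀ Q x - (a_f c + a_d) ‖x‖²`, because the quadratic term of the
equation is exactly `Kᵀ R K`. Since `Kᵀ R = -μ P B_u`, the two control terms contribute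
`-2 xᵀ Kᵀ R K x - 2 xᵀ Kᵀ R E K x`. Young's inequality bounds the uncertainty term by
`(1/a_f) xᵀ P B_f B_fᵀ P x + a_f c ‖x‖²` and the disturbance term by
`a_d ‖x‖² + (1/a_d) ‖P B_d‖² ‖d‖²`; the `(a_f c + a_d) ‖x‖²` built into `Q_f` absorbs both.
-/

theorem two_mul_dotProduct_le {ι : Type*} [Fintype ι] {a : ℝ} (ha : 0 < a) (u v : ι → ℝ) :
    2 * (u ⬝ᵥ v) ≤ a * (u ⬝ᵥ u) + a⁻¹ * (v ⬝ᵥ v) := by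
  simp only [dotProduct, Finset.mul_sum, ← Finset.sum_add_distrib]
  gcongr with i
  have : 0 ≤ (a * u i - v i) ^ 2 * a⁻¹ := by positivity
  have : a * a⁻¹ = 1 := mul_inv_cancel₀ ha.ne'
  nlinarith

theorem dotProduct_mulVec_self_le_l2OpNorm_sq {p k : ℕ} (M : Matrix (Fin p) (Fin k) ℝ)
    (u : Fin k → ℝ) : M *ᵥ u ⬝ᵥ M *ᵥ u ≤ l2OpNorm M ^ 2 * (u ⬝ᵥ u) := by
  have hsq : ∀ {j : ℕ} (z : Fin j → ℝ), z ⬝ᵥ z = ‖WithLp.toLp 2 z‖ ^ 2 := fun z => by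
    rw [← real_inner_self_eq_norm_sq, EuclideanSpace.inner_eq_star_dotProduct]; rfl
  rw [hsq, hsq, ← mul_pow]
  gcongr
  exact (toEuclideanLin M).toContinuousLinearMap.le_opNorm (WithLp.toLp 2 u)

namespace Matrix

variable {ι κ α : Type*} [Fintype ι] [Fintype κ]

theorem dotProduct_mulVec_mul_transpose [CommRing α] (M : Matrix ι κ α) (x : ι → α) :
    x ⬝ᵥ (M * Mᵀ) *ᵥ x = Mᵀ *ᵥ x ⬝ᵥ Mᵀ *ᵥ x := by
  rw [← mulVec_mulVec, dotProduct_mulVec, ← mulVec_transpose]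

theorem two_mul_dotProduct_mulVec_le {a : ℝ} (ha : 0 < a) (M : Matrix ι κ ℝ)
    (x : ι → ℝ) (y : κ → ℝ) :
    2 * (x ⬝ᵥ M *ᵥ y) ≤ a⁻¹ * (x ⬝ᵥ (M * Mᵀ) *ᵥ x) + a * (y ⬝ᵥ y) := by
  rw [dotProduct_mulVec, ← mulVec_transpose, dotProduct_comm, dotProduct_mulVec_mul_transpose,
    add_comm]
  exact two_mul_dotProduct_le ha y (Mᵀ *ᵥ x)

theorem two_mul_dotProduct_mulVec_mulVec [CommRing α] {P : Matrix ι ι α} (hP : P.IsSymm)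
    (A : Matrix ι ι α) (x : ι → α) :
    2 * (x ⬝ᵥ P *ᵥ A *ᵥ x) = x ⬝ᵥ (Aᵀ * P + P * A) *ᵥ x := by
  have : x ⬝ᵥ (Aᵀ * P) *ᵥ x = x ⬝ᵥ P *ᵥ A *ᵥ x := by
    rw [← mulVec_mulVec, dotProduct_mulVec, vecMul_transpose, dotProduct_mulVec x P,
      ← mulVec_transpose, hP.eq, dotProduct_comm]
  rw [add_mulVec, dotProduct_add, this, mulVec_mulVec]
  ring

section Gain

variable [DecidableEq κ] [CommRing α] {P : Matrix ι ι α} {B : Matrix ι κ α}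
  {R : Matrix κ κ α} {K : Matrix κ ι α} {μ : α}

theorem transpose_mul_eq_of_gain (hP : P.IsSymm) (hR : R.IsSymm) (hRdet : IsUnit R.det)
    (hK : K = (-μ) • (R⁻¹ * Bᵀ * P)) : Kᵀ * R = (-μ) • (P * B) := by
  rw [hK, transpose_smul, transpose_mul, transpose_mul, transpose_transpose, hP.eq,
    transpose_nonsing_inv, hR.eq, smul_mul, Matrix.mul_assoc, Matrix.mul_assoc,
    nonsing_inv_mul _ hRdet, Matrix.mul_one]

theorem transpose_mul_mul_eq_of_gain (hP : P.IsSymm) (hR : R.IsSymm) (hRdet : IsUnit R.det)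
    (hK : K = (-μ) • (R⁻¹ * Bᵀ * P)) : Kᵀ * R * K = μ ^ 2 • (P * B * R⁻¹ * Bᵀ * P) := by
  rw [transpose_mul_eq_of_gain hP hR hRdet hK, hK, smul_mul, Matrix.mul_smul, smul_smul, neg_mul_neg,
    ← sq]
  simp only [Matrix.mul_assoc]

end Gain

end Matrix

theorem stmt9_general {n m g q : ℕ}
    (A P Q : Matrix (Fin n) (Fin n) ℝ) (Bu : Matrix (Fin n) (Fin m) ℝ)
    (R : Matrix (Fin m) (Fin m) ℝ) (μ af ad c : ℝ)
    (hPsymm : P.IsSymm) (hR : R.PosDef)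
    (haf : 0 < af) (had : 0 < ad)
    (Qf : Matrix (Fin n) (Fin n) ℝ) (hQf : Qf = Q + (af * c + ad) • (1 : Matrix (Fin n) (Fin n) ℝ))
    (hARE : Aᵀ * P + P * A + Qf - (μ ^ 2) • (P * Bu * R⁻¹ * Buᵀ * P) = 0)
    (K : Matrix (Fin m) (Fin n) ℝ) (hK : K = (-μ) • (R⁻¹ * Buᵀ * P))
    (E : Matrix (Fin m) (Fin m) ℝ)
    (Bf : Matrix (Fin n) (Fin g) ℝ) (Bd : Matrix (Fin n) (Fin q) ℝ) :
    ∀ (x : Fin n → ℝ) (d : Fin q → ℝ) (f : Fin g → ℝ),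
      f ⬝ᵥ f ≤ c * (x ⬝ᵥ x) →
      ∀ (v : Fin m → ℝ), v = K.mulVec x →
      ∀ (w : Fin n → ℝ),
        w = A.mulVec x + μ • Bu.mulVec v + μ • Bu.mulVec (E.mulVec v)
            + Bf.mulVec f + Bd.mulVec d →
      2 * (x ⬝ᵥ P.mulVec w) ≤
        -(x ⬝ᵥ (Q + Kᵀ * R * K + (2 : ℝ) • (Kᵀ * R * E * K)
            - (1 / af) • (P * Bf * Bfᵀ * P)).mulVec x)
          + (1 / ad) * (l2OpNorm (P * Bd)) ^ 2 * (d ⬝ᵥ d) := by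
  intro x d f hf v hv w hw
  have hRsymm : R.IsSymm := hR.isHermitian
  have hRdet : IsUnit R.det := hR.det_pos.ne'.isUnit
  have hKR := transpose_mul_eq_of_gain hPsymm hRsymm hRdet hK
  have hLyap : Aᵀ * P + P * A = Kᵀ * R * K - Qf := by
    rw [transpose_mul_mul_eq_of_gain hPsymm hRsymm hRdet hK]
    exact eq_sub_of_add_eq (sub_eq_zero.mp hARE)
  have hBu : ∀ y, μ * (x ⬝ᵥ P *ᵥ Bu *ᵥ y) = -(x ⬝ᵥ (Kᵀ * R) *ᵥ y) := fun y => by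
    rw [hKR, mulVec_mulVec, smul_mulVec, dotProduct_smul, smul_eq_mul]; ring
  have hBuK := hBu (K *ᵥ x)
  have hBuEK := hBu (E *ᵥ K *ᵥ x)
  have hA := two_mul_dotProduct_mulVec_mulVec hPsymm A x
  rw [hLyap, hQf] at hA
  have hBf := two_mul_dotProduct_mulVec_le haf (P * Bf) x f
  rw [transpose_mul, hPsymm.eq, ← Matrix.mul_assoc] at hBf
  have hBd := two_mul_dotProduct_le had x ((P * Bd) *ᵥ d)
  have hnorm := dotProduct_mulVec_self_le_l2OpNorm_sq (P * Bd) d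
  subst hv hw
  simp only [mulVec_add, mulVec_smul, dotProduct_add, dotProduct_smul, smul_eq_mul, sub_mulVec,
    add_mulVec, smul_mulVec, dotProduct_sub, one_mulVec] at hA ⊢
  simp only [mulVec_mulVec, ← Matrix.mul_assoc] at hA hBuK hBuEK ⊢
  rw [one_div, one_div]
  linarith [mul_le_mul_of_nonneg_left hf haf.le,
    mul_le_mul_of_nonneg_left hnorm (inv_nonneg.mpr had.le)]

/-- With `Q_f := Q + (a_f c + a_d) I`, the algebraic Riccati equation
`Aᵀ P + P A + Q_f - μ² P B_u R⁻¹ B_uᵀ P = 0`, and gain `K := -μ R⁻¹ B_uᵀ P`, for all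
`x`, `d`, and all `f` with `fᵀ f ≤ c xᵀ x`, setting `v := K x` and
`w := A x + μ B_u v + μ B_u E v + B_f f + B_d d`, one has
`2 xᵀ P w ≤ -xᵀ (Q + Kᵀ R K + 2 Kᵀ R E K - (1/a_f) P B_f B_fᵀ P) x
  + (1/a_d) ‖P B_d‖² ‖d‖²`. -/
theorem stmt9 {n m g q : ℕ}
    (A P Q : Matrix (Fin n) (Fin n) ℝ) (Bu : Matrix (Fin n) (Fin m) ℝ)
    (R : Matrix (Fin m) (Fin m) ℝ) (μ af ad c : ℝ)
    (hPsymm : P.IsSymm) (hQsymm : Q.IsSymm) (hR : R.PosDef)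
    (hμ : 0 < μ) (haf : 0 < af) (had : 0 < ad) (hc : 0 ≤ c)
    (Qf : Matrix (Fin n) (Fin n) ℝ) (hQf : Qf = Q + (af * c + ad) • (1 : Matrix (Fin n) (Fin n) ℝ))
    (hARE : Aᵀ * P + P * A + Qf - (μ ^ 2) • (P * Bu * R⁻¹ * Buᵀ * P) = 0)
    (K : Matrix (Fin m) (Fin n) ℝ) (hK : K = (-μ) • (R⁻¹ * Buᵀ * P))
    (E : Matrix (Fin m) (Fin m) ℝ)
    (Bf : Matrix (Fin n) (Fin g) ℝ) (Bd : Matrix (Fin n) (Fin q) ℝ) :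
    ∀ (x : Fin n → ℝ) (d : Fin q → ℝ) (f : Fin g → ℝ),
      f ⬝ᵥ f ≤ c * (x ⬝ᵥ x) →
      ∀ (v : Fin m → ℝ), v = K.mulVec x →
      ∀ (w : Fin n → ℝ),
        w = A.mulVec x + μ • Bu.mulVec v + μ • Bu.mulVec (E.mulVec v)
            + Bf.mulVec f + Bd.mulVec d →
      2 * (x ⬝ᵥ P.mulVec w) ≤
        -(x ⬝ᵥ (Q + Kᵀ * R * K + (2 : ℝ) • (Kᵀ * R * E * K)
            - (1 / af) • (P * Bf * Bfᵀ * P)).mulVec x)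
          + (1 / ad) * (l2OpNorm (P * Bd)) ^ 2 * (d ⬝ᵥ d) :=
  stmt9_general A P Q Bu R μ af ad c hPsymm hR haf had Qf hQf hARE K hK E Bf Bd
end

section
/- Let V be a finite set and g : V → V a function such that for all i, j, k ∈ V with i ≠ j and j ≠ k, if g(i) = j and g(j) = k then g(k) = k. Then for every i ∈ V, the point g(g(i)) is a fixed point of g, i.e., g(g(g(i))) = g(g(i)); equivalently, every node reaches a node with a selfloop in at most two steps. -/
theorem stmt12_general {V : Type*} (g : V → V)
    (h : ∀ i j k : V, i ≠ j → j ≠ k → g i = j → g j = k → g k = k) :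
    ∀ i : V, g (g (g i)) = g (g i) := by
  intro i
  rcases eq_or_ne i (g i) with hi | hi
  · simp only [← hi]
  rcases eq_or_ne (g i) (g (g i)) with hgi | hgi
  · rw [← hgi, ← hgi]
  exact h i (g i) (g (g i)) hi hgi rfl rfl

/-- Let `V` be a finite set and `g : V → V` such that for all `i, j, k` with `i ≠ j` and
`j ≠ k`, if `g i = j` and `g j = k` then `g k = k` (the SMT connectivity constraint
of Algorithm 2).  Then for every `i`, the point `g (g i)` is a fixed point of `g`:
`g (g (g i)) = g (g i)`; i.e., every node reaches a node with a selfloop in at most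
two steps. -/
theorem stmt12 {V : Type*} [Fintype V] (g : V → V)
    (h : ∀ i j k : V, i ≠ j → j ≠ k → g i = j → g j = k → g k = k) :
    ∀ i : V, g (g (g i)) = g (g i) :=
  stmt12_general g h
end

section
/- Let V be a finite set and g : V → V a function such that for every i ∈ V, g(g(g(i))) = g(g(i)) (every node reaches a fixed point of g in at most two steps). Consider the simple undirected graph G on vertex set V whose edges are the pairs {i, g(i)} for those i with g(i) ≠ i. Then every connected component of G contains a vertex k with g(k) = k. -/
namespace SimpleGraph

theorem fromRel_apply_reachable {V : Type*} (f : V → V) (a : V) :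
    (fromRel fun a b => f a = b).Reachable a (f a) := by
  by_cases hfa : f a = a
  · rw [hfa]
  · exact Adj.reachable ((fromRel_adj _ _ _).mpr ⟨Ne.symm hfa, Or.inl rfl⟩)

theorem fromRel_iterate_reachable {V : Type*} (f : V → V) (a : V) (n : ℕ) :
    (fromRel fun a b => f a = b).Reachable a (f^[n] a) := by
  induction n with
  | zero => rfl
  | succ n ih =>
    rw [Function.iterate_succ_apply']
    exact ih.trans (fromRel_apply_reachable f _)

end SimpleGraph

theorem stmt13_general {V : Type*} (g : V → V)
    (h : ∀ i : V, g (g (g i)) = g (g i)) :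
    ∀ C : (SimpleGraph.fromRel (fun a b => g a = b)).ConnectedComponent,
      ∃ k : V, g k = k ∧
        (SimpleGraph.fromRel (fun a b => g a = b)).connectedComponentMk k = C := by
  refine SimpleGraph.ConnectedComponent.ind fun v => ⟨g (g v), h v, ?_⟩
  exact SimpleGraph.ConnectedComponent.sound
    (SimpleGraph.fromRel_iterate_reachable g v 2).symm

/-- Let `V` be a finite set and `g : V → V` with `g (g (g i)) = g (g i)` for every `i`
(every node reaches a fixed point of `g` in at most two steps).  Let `G` be the
simple undirected graph on `V` whose edges are the pairs `{i, g i}` for `g i ≠ i`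
(the symmetrization `SimpleGraph.fromRel (fun a b => g a = b)`).  Then every
connected component of `G` contains a vertex `k` with `g k = k`. -/
theorem stmt13 {V : Type*} [Fintype V] (g : V → V)
    (h : ∀ i : V, g (g (g i)) = g (g i)) :
    ∀ C : (SimpleGraph.fromRel (fun a b => g a = b)).ConnectedComponent,
      ∃ k : V, g k = k ∧
        (SimpleGraph.fromRel (fun a b => g a = b)).connectedComponentMk k = C :=
  stmt13_general g h
end
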